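/- With X = √(g₂^{-1} g₁), g_i = I + ε h_i, Tr(X⁴) = n + 2ε Tr(h₁ - h₂) + ε²(Tr(h₁²) + 3 Tr(h₂²) - 4 Tr(h₁h₂)) + ε³(-4 Tr(h₂³) + 6 Tr(h₁h₂²) - 2 Tr(h₁²h₂)) + O(ε⁴). -/

import Mathlib

/-!
Write `y = (1 + ε h₂)⁻¹` and `d = h₁ - h₂`. Then `g₂⁻¹ g₁ = 1 + ε M` with `M = y d`, and `M`
satisfies `M = d - ε h₂ M`. Substituting this relation into
`Tr (1 + ε M)² = n + 2ε Tr M + ε² Tr M²` until every remaining occurrence of `M` carries a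
factor `ε⁴` amounts to the Neumann expansion of `y` to order `ε³`. The coefficient of `ε⁴` is
then a trace polynomial in `M`, bounded near `ε = 0` because matrix inversion is continuous
at `1`.
-/

open Asymptotics Filter Matrix Topology

section

variable {m R : Type*} [Fintype m] [DecidableEq m] [CommRing R]

theorem mul_one_add_smul_eq_of_mul_eq_one {A : Type*} [Ring A] [Algebra R A] {s : R} {y a b : A}
    (hy : y * (1 + s • b) = 1) : y * (1 + s • a) = 1 + s • (y * (a - b)) := by
  calc y * (1 + s • a) = y * (1 + s • b) + s • (y * (a - b)) := by
        rw [mul_sub, mul_add, mul_add, mul_smul_comm, mul_smul_comm, smul_sub]; abel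
    _ = 1 + s • (y * (a - b)) := by rw [hy]

theorem mul_eq_sub_smul_mul_of_mul_eq_one {A : Type*} [Ring A] [Algebra R A] {s : R} {y b : A}
    (hy : (1 + s • b) * y = 1) (d : A) : y * d = d - s • (b * (y * d)) := by
  calc y * d = (1 + s • b) * y * d - s • (b * (y * d)) := by
        rw [add_mul, add_mul, one_mul, smul_mul_assoc, smul_mul_assoc, mul_assoc]; abel
    _ = d - s • (b * (y * d)) := by rw [hy, one_mul]

theorem trace_one_add_smul_sq (s : R) (M : Matrix m m R) :
    trace ((1 + s • M) ^ 2) = Fintype.card m + 2 * s * trace M + s ^ 2 * trace (M * M) := by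
  simp only [sq, add_mul, mul_add, one_mul, mul_one, smul_mul_smul_comm, trace_add, trace_smul,
    trace_one, smul_eq_mul]
  ring

def fourthOrderRemainder (d h M : Matrix m m R) : R :=
  trace (M * h * h * M) + trace (h * d * h * M) + trace (d * h * h * M) - 2 * trace (h * h * h * M)

theorem trace_sq_one_add_smul_of_eq {s : R} {d h M : Matrix m m R} (hM : M = d - s • (h * M)) :
    trace ((1 + s • M) ^ 2) = Fintype.card m + 2 * s * trace d
      + s ^ 2 * (trace (d * d) - 2 * trace (h * d))
      + s ^ 3 * (2 * trace (h * h * d) - 2 * trace (h * d * d))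
      + s ^ 4 * fourthOrderRemainder d h M := by
  have expand (u : Matrix m m R) : trace (u * M) = trace (u * d) - s * trace (u * h * M) := by
    conv_lhs => rw [hM]
    rw [mul_sub, mul_smul_comm, trace_sub, trace_smul, smul_eq_mul, Matrix.mul_assoc]
  have trace_M : trace M = trace d - s * trace (h * d) + s ^ 2 * trace (h * h * d)
      - s ^ 3 * trace (h * h * h * M) := by
    have e1 := expand 1
    simp only [Matrix.one_mul] at e1
    linear_combination e1 - s * expand h + s ^ 2 * expand (h * h)
  have trace_M_mul_M : trace (M * M) = trace (d * d) - 2 * s * trace (h * d * d)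
      + s ^ 2 * (trace (M * h * h * M) + trace (h * d * h * M) + trace (d * h * h * M)) := by
    have c1 : trace (M * d) = trace (d * M) := trace_mul_comm _ _
    have c2 : trace (M * h * d) = trace (h * d * M) := by
      rw [Matrix.mul_assoc, trace_mul_comm]
    have c3 : trace (d * h * d) = trace (h * d * d) := by
      rw [Matrix.mul_assoc, trace_mul_comm, Matrix.mul_assoc]
    linear_combination expand M + c1 - s * expand (M * h) + expand d - s * expand (d * h)
      - s * c2 - s * expand (h * d) - s * c3
  rw [trace_one_add_smul_sq, trace_M, trace_M_mul_M, fourthOrderRemainder]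
  ring

theorem trace_sq_mul_one_add_smul_of_mul_eq_one {s : R} {y a b : Matrix m m R}
    (hyl : y * (1 + s • b) = 1) (hyr : (1 + s • b) * y = 1) :
    trace ((y * (1 + s • a)) ^ 2) = Fintype.card m + 2 * s * trace (a - b)
      + s ^ 2 * (trace (a ^ 2) + 3 * trace (b ^ 2) - 4 * trace (a * b))
      + s ^ 3 * (-4 * trace (b ^ 3) + 6 * trace (a * b ^ 2) - 2 * trace (a ^ 2 * b))
      + s ^ 4 * fourthOrderRemainder (a - b) b (y * (a - b)) := by
  rw [mul_one_add_smul_eq_of_mul_eq_one hyl,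
    trace_sq_one_add_smul_of_eq (mul_eq_sub_smul_mul_of_mul_eq_one hyr _)]
  have c1 : trace (b * a) = trace (a * b) := trace_mul_comm _ _
  have c2 : trace (b * (b * a)) = trace (a * (b * b)) := trace_mul_cycle' _ _ _
  have c3 : trace (b * (a * b)) = trace (a * (b * b)) := by rw [trace_mul_comm, Matrix.mul_assoc]
  have c4 : trace (b * (a * a)) = trace (a * (a * b)) := by rw [trace_mul_comm, Matrix.mul_assoc]
  simp only [mul_sub, sub_mul, trace_sub, pow_succ, pow_zero, Matrix.one_mul, Matrix.mul_assoc]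
  linear_combination -(3 * s ^ 2) * c1 + s ^ 3 * (4 * c2 + 2 * c3 - 2 * c4)
end

section

variable {𝕜 : Type*} [NontriviallyNormedField 𝕜]

theorem isBigO_pow_of_eventuallyEq_pow_mul {f g : 𝕜 → 𝕜} {k : ℕ}
    (hf : ∀ᶠ ε in 𝓝 0, f ε = ε ^ k * g ε) (hg : ContinuousAt g 0) :
    f =O[𝓝 0] fun ε => ε ^ k := by
  have := (isBigO_refl (fun ε : 𝕜 => ε ^ k) (𝓝 0)).mul (hg.tendsto.isBigO_one 𝕜)
  simp only [mul_one] at this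
  exact this.congr' (hf.mono fun _ h => h.symm) EventuallyEq.rfl

theorem eventually_isUnit_det_one_add_smul {m : Type*} [Fintype m] [DecidableEq m]
    (h : Matrix m m 𝕜) : ∀ᶠ ε : 𝕜 in 𝓝 0, IsUnit (1 + ε • h).det := by
  have hcont : ContinuousAt (fun ε : 𝕜 => (1 + ε • h).det) 0 := by fun_prop
  filter_upwards [hcont.eventually_ne (by simp : (1 + (0 : 𝕜) • h).det ≠ 0)] with ε hε
  exact hε.isUnit

theorem continuousAt_inv_one_add_smul {m : Type*} [Fintype m] [DecidableEq m]
    (h : Matrix m m 𝕜) : ContinuousAt (fun ε : 𝕜 => (1 + ε • h)⁻¹) 0 := by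
  refine ContinuousAt.comp (g := Inv.inv) ?_ (by fun_prop)
  refine continuousAt_matrix_inv _ ?_
  simp only [zero_smul, add_zero, det_one]
  rw [Ring.inverse_eq_inv']
  exact continuousAt_inv₀ one_ne_zero

end

theorem trace_fourth_expansion_general (n : ℕ) (h₁ h₂ : Matrix (Fin n) (Fin n) ℝ) :
    (fun ε : ℝ =>
        (((1 + ε • h₂)⁻¹ * (1 + ε • h₁)) ^ 2).trace
          - ((n : ℝ) + 2 * ε * (h₁ - h₂).trace
            + ε ^ 2 * ((h₁ ^ 2).trace + 3 * (h₂ ^ 2).trace - 4 * (h₁ * h₂).trace)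
            + ε ^ 3 * (-4 * (h₂ ^ 3).trace + 6 * (h₁ * h₂ ^ 2).trace
              - 2 * (h₁ ^ 2 * h₂).trace)))
      =O[nhds 0] fun ε : ℝ => ε ^ 4 := by
  refine isBigO_pow_of_eventuallyEq_pow_mul
    (g := fun ε => fourthOrderRemainder (h₁ - h₂) h₂ ((1 + ε • h₂)⁻¹ * (h₁ - h₂))) ?_ ?_
  · filter_upwards [eventually_isUnit_det_one_add_smul h₂] with ε hε
    rw [trace_sq_mul_one_add_smul_of_mul_eq_one (nonsing_inv_mul _ hε) (mul_nonsing_inv _ hε),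
      Fintype.card_fin]
    ring
  · have := continuousAt_inv_one_add_smul h₂
    unfold fourthOrderRemainder
    fun_prop

/-- For `X = √(g₂⁻¹ g₁)` with `g_i = I + ε h_i`, so that `X⁴ = (g₂⁻¹g₁)²`,
`Tr(X⁴) = n + 2ε Tr(h₁-h₂) + ε²(Tr h₁² + 3 Tr h₂² - 4 Tr(h₁h₂))
  + ε³(-4 Tr h₂³ + 6 Tr(h₁h₂²) - 2 Tr(h₁²h₂)) + O(ε⁴)`. -/
theorem trace_fourth_expansion (n : ℕ) (h₁ h₂ : Matrix (Fin n) (Fin n) ℝ)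
    (hs₁ : h₁.IsSymm) (hs₂ : h₂.IsSymm) :
    (fun ε : ℝ =>
        (((1 + ε • h₂)⁻¹ * (1 + ε • h₁)) ^ 2).trace
          - ((n : ℝ) + 2 * ε * (h₁ - h₂).trace
            + ε ^ 2 * ((h₁ ^ 2).trace + 3 * (h₂ ^ 2).trace - 4 * (h₁ * h₂).trace)
            + ε ^ 3 * (-4 * (h₂ ^ 3).trace + 6 * (h₁ * h₂ ^ 2).trace
              - 2 * (h₁ ^ 2 * h₂).trace)))
      =O[nhds 0] fun ε : ℝ => ε ^ 4 :=
  trace_fourth_expansion_general n h₁ h₂
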